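/- arXiv:1504.00889 — 7 statements merged into one kernel-verified Lean document; each statement's English description precedes it below -/
import Mathlib

section
/- Let A and B be real n×n matrices such that A is symmetric positive definite and the product A·B is symmetric. Then every eigenvalue of B (an element of the spectrum of B viewed as a complex matrix) is a positive real number if and only if A·B is positive definite; likewise, every eigenvalue of B is a negative real number if and only if A·B is negative definite. -/
open Matrix

/-- A real symmetric matrix is positive definite: `vᵀPv > 0` for all nonzero `v`. -/
def Matrix.IsPD {n : ℕ} (P : Matrix (Fin n) (Fin n) ℝ) : Prop :=
  Pᵀ = P ∧ ∀ v : Fin n → ℝ, v ≠ 0 → 0 < v ⬝ᵥ (P *ᵥ v)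

/-- A real symmetric matrix is negative definite: `vᵀPv < 0` for all nonzero `v`. -/
def Matrix.IsND {n : ℕ} (P : Matrix (Fin n) (Fin n) ℝ) : Prop :=
  Pᵀ = P ∧ ∀ v : Fin n → ℝ, v ≠ 0 → v ⬝ᵥ (P *ᵥ v) < 0

/-!
Write `A = Sᴴ S` with `S` invertible (e.g. `S = √A`). Then `M = S B S⁻¹ = S⁻ᴴ (A B) S⁻¹` is
symmetric. Since `B` is similar to `M`, its complex spectrum is the set of (real) eigenvalues of
`M`; since `A B = Sᴴ M S` is congruent to `M`, it is positive definite iff `M` is, i.e. iff those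
eigenvalues are positive. The negative definite case is the positive one applied to `-B`.
-/

namespace Matrix

variable {ι : Type*} [Fintype ι] [DecidableEq ι]

section RCLike

variable {𝕜 : Type*} [RCLike 𝕜]

open scoped ComplexOrder

open scoped MatrixOrder in
lemma PosDef.exists_unit_eq_star_mul_self {A : Matrix ι ι 𝕜} (hA : A.PosDef) :
    ∃ S : (Matrix ι ι 𝕜)ˣ, A = star (S : Matrix ι ι 𝕜) * S := by
  have hsqrt : IsUnit (CFC.sqrt A) := (CFC.isUnit_sqrt_iff A hA.posSemidef.nonneg).2 hA.isUnit
  refine ⟨hsqrt.unit, ?_⟩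
  rw [IsUnit.unit_spec, (CFC.sqrt_nonneg A).isSelfAdjoint.star_eq,
    CFC.sqrt_mul_sqrt_self A hA.posSemidef.nonneg]

lemma PosDef.exists_isHermitian_conj_of_isHermitian_mul {A B : Matrix ι ι 𝕜} (hA : A.PosDef)
    (hAB : (A * B).IsHermitian) :
    ∃ (S : (Matrix ι ι 𝕜)ˣ) (M : Matrix ι ι 𝕜), M.IsHermitian ∧
      B = S⁻¹.val * M * S ∧ A * B = star S.val * M * S := by
  obtain ⟨S, rfl⟩ := hA.exists_unit_eq_star_mul_self
  refine ⟨S, S * B * S⁻¹.val, ?_, ?_, ?_⟩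
  · have hM : S.val * B * S⁻¹.val = (S⁻¹.val)ᴴ * (star S.val * S * B) * S⁻¹.val := by
      rw [← star_eq_conjTranspose]
      simp only [← mul_assoc, ← star_mul, Units.mul_inv, star_one, one_mul]
    rw [hM]
    exact isHermitian_conjTranspose_mul_mul _ hAB
  · simp [Matrix.mul_assoc]
  · simp [Matrix.mul_assoc]

end RCLike

lemma mem_spectrum_map_iff_isRoot_charpoly {K L : Type*} [Field K] [Field L] (f : K →+* L)
    (X : Matrix ι ι K) (μ : L) : μ ∈ spectrum L (X.map f) ↔ (X.charpoly.map f).IsRoot μ := by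
  rw [mem_spectrum_iff_isRoot_charpoly, charpoly_map]

lemma spectrum_map_units_conj' {K L : Type*} [Field K] [Field L] (f : K →+* L)
    (S : (Matrix ι ι K)ˣ) (M : Matrix ι ι K) :
    spectrum L ((S⁻¹.val * M * S).map f) = spectrum L (M.map f) := by
  ext μ
  simp only [mem_spectrum_map_iff_isRoot_charpoly, coe_units_inv, charpoly_units_conj']

lemma IsHermitian.spectrum_map_ofReal {M : Matrix ι ι ℝ} (hM : M.IsHermitian) :
    spectrum ℂ (M.map Complex.ofReal) = Complex.ofReal '' Set.range hM.eigenvalues := by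
  ext μ
  refine (mem_spectrum_map_iff_isRoot_charpoly Complex.ofRealHom M μ).trans ?_
  rw [hM.charpoly_eq]
  simp [Polynomial.map_prod, Polynomial.eval_prod, Finset.prod_eq_zero_iff, sub_eq_zero,
    eq_comm (a := μ)]

theorem forall_mem_spectrum_map_ofReal_pos_iff_posDef {A B : Matrix ι ι ℝ} (hA : A.PosDef)
    (hAB : (A * B).IsHermitian) :
    (∀ μ ∈ spectrum ℂ (B.map Complex.ofReal), μ.im = 0 ∧ 0 < μ.re) ↔ (A * B).PosDef := by
  obtain ⟨S, M, hM, rfl, hcongr⟩ := hA.exists_isHermitian_conj_of_isHermitian_mul hAB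
  have hspec : spectrum ℂ ((S⁻¹.val * M * S).map Complex.ofReal) =
      spectrum ℂ (M.map Complex.ofReal) :=
    spectrum_map_units_conj' Complex.ofRealHom S M
  rw [hcongr, IsUnit.posDef_star_left_conjugate_iff S.isUnit, hM.posDef_iff_eigenvalues_pos,
    hspec, hM.spectrum_map_ofReal]
  simp

end Matrix

lemma Matrix.isPD_iff_posDef {n : ℕ} (P : Matrix (Fin n) (Fin n) ℝ) : P.IsPD ↔ P.PosDef := by
  rw [posDef_iff_dotProduct_mulVec, IsPD, IsHermitian, conjTranspose_eq_transpose_of_trivial]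
  simp

lemma Matrix.isND_iff_posDef_neg {n : ℕ} (P : Matrix (Fin n) (Fin n) ℝ) : P.IsND ↔ (-P).PosDef := by
  rw [← isPD_iff_posDef, IsND, IsPD, transpose_neg, neg_inj]
  simp only [neg_mulVec, dotProduct_neg, neg_pos]

theorem stmt_0 {n : ℕ} (A B : Matrix (Fin n) (Fin n) ℝ)
    (hA : A.IsPD) (hAB : (A * B)ᵀ = A * B) :
    ((∀ μ ∈ spectrum ℂ (B.map Complex.ofReal), μ.im = 0 ∧ 0 < μ.re) ↔ (A * B).IsPD) ∧
    ((∀ μ ∈ spectrum ℂ (B.map Complex.ofReal), μ.im = 0 ∧ μ.re < 0) ↔ (A * B).IsND) := by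
  have hApos : A.PosDef := (isPD_iff_posDef A).1 hA
  have hABneg : (A * -B)ᵀ = A * -B := by rw [mul_neg, transpose_neg, hAB]
  refine ⟨?_, ?_⟩
  · rw [isPD_iff_posDef]
    exact forall_mem_spectrum_map_ofReal_pos_iff_posDef hApos (isHermitian_iff_isSymm.2 hAB)
  · rw [isND_iff_posDef_neg, ← mul_neg,
      ← forall_mem_spectrum_map_ofReal_pos_iff_posDef hApos (isHermitian_iff_isSymm.2 hABneg),
      Matrix.map_neg _ Complex.ofReal_neg, ← spectrum.neg_eq]
    simp only [Set.mem_neg, Set.forall_neg_mem, Complex.neg_im, neg_eq_zero, Complex.neg_re,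
      Left.neg_pos_iff]
end

section
/- Let ℓ be an odd positive integer and let A be a real n×n matrix all of whose eigenvalues are real (every element of the spectrum of A viewed as a complex matrix has zero imaginary part). Then every eigenvalue of the matrix ∑_{i=0}^{ℓ−1} Aⁱ is a positive real number. In particular, if λ is a real eigenvalue of A with λ ≠ 1, the corresponding eigenvalue (1 − λ^ℓ)/(1 − λ) of ∑_{i=0}^{ℓ−1} Aⁱ is positive, and if λ = 1 the corresponding eigenvalue is ℓ > 0. -/
open Matrix Polynomial

lemma geom_pos {ℓ : ℕ} (hodd : Odd ℓ) (hpos : 1 ≤ ℓ) (x : ℝ) :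
    0 < ∑ i ∈ Finset.range ℓ, x ^ i := by
  rcases lt_trichotomy x 1 with h | h | h
  · have hx : x ^ ℓ < 1 := by
      have := hodd.strictMono_pow (R := ℝ) h
      simpa using this
    rw [geom_sum_eq (by linarith) ℓ]
    exact div_pos_of_neg_of_neg (by linarith) (by linarith)
  · subst h; simp [Finset.sum_const]; omega
  · have hx : 1 < x ^ ℓ := one_lt_pow₀ h (by omega)
    rw [geom_sum_eq (by linarith) ℓ]
    exact div_pos (by linarith) (by linarith)

theorem stmt_4 {n : ℕ} (ℓ : ℕ) (hodd : Odd ℓ) (hpos : 1 ≤ ℓ)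
    (A : Matrix (Fin n) (Fin n) ℝ)
    (hA : ∀ μ ∈ spectrum ℂ (A.map Complex.ofReal), μ.im = 0) :
    (∀ μ ∈ spectrum ℂ ((∑ i ∈ Finset.range ℓ, A ^ i).map Complex.ofReal),
        μ.im = 0 ∧ 0 < μ.re) ∧
    (∀ lam : ℝ, (lam : ℂ) ∈ spectrum ℂ (A.map Complex.ofReal) → lam ≠ 1 →
        (((1 - lam ^ ℓ) / (1 - lam) : ℝ) : ℂ) ∈
            spectrum ℂ ((∑ i ∈ Finset.range ℓ, A ^ i).map Complex.ofReal) ∧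
          0 < (1 - lam ^ ℓ) / (1 - lam)) ∧
    ((1 : ℂ) ∈ spectrum ℂ (A.map Complex.ofReal) →
        (ℓ : ℂ) ∈ spectrum ℂ ((∑ i ∈ Finset.range ℓ, A ^ i).map Complex.ofReal) ∧
          0 < (ℓ : ℝ)) := by
  rcases Nat.eq_zero_or_pos n with hn | hn
  · subst hn
    have hsub : Subsingleton (Matrix (Fin 0) (Fin 0) ℂ) := by
      constructor; intro a b; ext i; exact absurd i.2 (by omega)
    have hemp : ∀ B : Matrix (Fin 0) (Fin 0) ℂ, spectrum ℂ B = ∅ := by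
      intro B
      ext z
      simp [spectrum.mem_iff, isUnit_of_subsingleton]
    refine ⟨?_, ?_, ?_⟩
    · intro μ hμ; rw [hemp] at hμ; exact hμ.elim
    · intro lam hl; rw [hemp] at hl; exact hl.elim
    · intro h1; rw [hemp] at h1; exact h1.elim
  · haveI : NeZero n := ⟨by omega⟩
    set B := A.map Complex.ofReal with hB
    -- map commutes with sums and powers
    have hmap : (∑ i ∈ Finset.range ℓ, A ^ i).map Complex.ofReal
        = ∑ i ∈ Finset.range ℓ, B ^ i := by
      show (Complex.ofRealHom.mapMatrix : Matrix (Fin n) (Fin n) ℝ →+* _)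
          (∑ i ∈ Finset.range ℓ, A ^ i) = _
      rw [map_sum]
      exact Finset.sum_congr rfl fun i _ => map_pow _ A i
    set p : ℂ[X] := ∑ i ∈ Finset.range ℓ, X ^ i with hp
    have haev : aeval B p = ∑ i ∈ Finset.range ℓ, B ^ i := by
      simp [hp, map_sum]
    have hnon : (spectrum ℂ B).Nonempty :=
      spectrum.nonempty_of_isAlgClosed_of_finiteDimensional ℂ B
    have hspec : spectrum ℂ ((∑ i ∈ Finset.range ℓ, A ^ i).map Complex.ofReal)
        = (fun k => eval k p) '' spectrum ℂ B := by
      rw [hmap, ← haev, spectrum.map_polynomial_aeval_of_nonempty B p hnon]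
    have heval : ∀ z : ℂ, eval z p = ∑ i ∈ Finset.range ℓ, z ^ i := by
      intro z; simp [hp, eval_finset_sum]
    refine ⟨?_, ?_, ?_⟩
    · intro μ hμ
      rw [hspec] at hμ
      obtain ⟨ν, hν, hμν⟩ := hμ
      have him := hA ν hν
      have hν' : ν = (ν.re : ℂ) := by
        apply Complex.ext <;> simp [him]
      have hcast : μ = ((∑ i ∈ Finset.range ℓ, ν.re ^ i : ℝ) : ℂ) := by
        rw [← hμν]
        dsimp only
        rw [heval]
        push_cast
        rw [← hν']
      rw [hcast]
      exact ⟨Complex.ofReal_im _, by rw [Complex.ofReal_re]; exact geom_pos hodd hpos ν.re⟩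
    · intro lam hl hne
      have hmem : (((1 - lam ^ ℓ) / (1 - lam) : ℝ) : ℂ) ∈
          spectrum ℂ ((∑ i ∈ Finset.range ℓ, A ^ i).map Complex.ofReal) := by
        rw [hspec]
        refine ⟨(lam : ℂ), hl, ?_⟩
        dsimp only
        rw [heval]
        have h2 : (1 - lam ^ ℓ) / (1 - lam) = ∑ i ∈ Finset.range ℓ, lam ^ i := by
          rw [geom_sum_eq hne ℓ, ← neg_div_neg_eq]
          ring_nf
        rw [h2]
        push_cast
        ring
      have hposv : 0 < (1 - lam ^ ℓ) / (1 - lam) := by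
        have := geom_pos hodd hpos lam
        rwa [geom_sum_eq hne ℓ, ← neg_div_neg_eq, neg_sub, neg_sub] at this
      exact ⟨hmem, hposv⟩
    · intro h1
      refine ⟨?_, by exact_mod_cast hpos⟩
      rw [hspec]
      refine ⟨1, h1, ?_⟩
      dsimp only
      rw [heval]
      simp
end

section
/- Let A be a real symmetric n×n matrix (not necessarily nonsingular), M a real symmetric invertible n×n matrix, N := M − A, H := M⁻¹N, and for ℓ ≥ 1 let C^(ℓ) := ∑_{i=0}^{ℓ−1} Hⁱ M⁻¹. If ℓ is odd, then C^(ℓ) is positive definite if and only if M is positive definite, and C^(ℓ) is negative definite if and only if M is negative definite. -/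
open Matrix

/-! If `W` is positive definite and `W H = Hᴴ W`, write `W = R²` with `R` the positive square
root; then `K = R H R⁻¹` is Hermitian and `(∑_{i<ℓ} Hⁱ) W⁻¹ = R⁻¹ (∑_{i<ℓ} Kⁱ) R⁻¹`, which is
positive definite for odd `ℓ` because `∑_{i<ℓ} xⁱ > 0` on all of `ℝ`. The iteration matrix
`H = M⁻¹ N` satisfies `M H = Hᴴ M = N`, so `M ≻ 0` gives `C ≻ 0`. Conversely, if `C ≻ 0` then
`W = M C M = M S` (with `S = ∑_{i<ℓ} Hⁱ`) is positive definite and `W H = Hᴴ W`, so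
`S W⁻¹ = M⁻¹ ≻ 0`. Replacing `(A, M)` by `(-A, -M)` leaves `H` unchanged and negates `C`, which
turns the definite case into the negative definite one. -/

namespace Matrix

open Finset
open scoped MatrixOrder ComplexOrder

variable {ι 𝕜 : Type*} [Fintype ι] [DecidableEq ι] [RCLike 𝕜]

theorem IsHermitian.posDef_geom_sum {K : Matrix ι ι 𝕜} (hK : K.IsHermitian) {ℓ : ℕ}
    (hℓ : Odd ℓ) : (∑ i ∈ range ℓ, K ^ i).PosDef := by
  have hcont : Continuous fun x : ℝ ↦ ∑ i ∈ range ℓ, x ^ i := by fun_prop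
  have hsum : cfc (fun x : ℝ ↦ ∑ i ∈ range ℓ, x ^ i) K = ∑ i ∈ range ℓ, K ^ i := by
    rw [← Finset.sum_fn, cfc_sum _ _ _ fun i _ ↦ by fun_prop]
    simp only [cfc_pow_id K _ hK.isSelfAdjoint]
  rw [← isStrictlyPositive_iff_posDef, ← hsum,
    cfc_isStrictlyPositive_iff _ _ hcont.continuousOn hK.isSelfAdjoint]
  exact fun x _ ↦ hℓ.geom_sum_pos

theorem PosDef.geom_sum_mul_inv {W H : Matrix ι ι 𝕜} (hW : W.PosDef) (hWH : W * H = Hᴴ * W)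
    {ℓ : ℕ} (hℓ : Odd ℓ) : ((∑ i ∈ range ℓ, H ^ i) * W⁻¹).PosDef := by
  have hUU : CFC.sqrt W * CFC.sqrt W = W := CFC.sqrt_mul_sqrt_self W hW.posSemidef.nonneg
  have hUh : (CFC.sqrt W)ᴴ = CFC.sqrt W := (CFC.sqrt_nonneg W).posSemidef.isHermitian
  obtain ⟨R, hR⟩ : IsUnit (CFC.sqrt W) := isUnit_of_mul_isUnit_left (hUU ▸ hW.isUnit)
  have hconj (i : ℕ) := Units.conj_pow R H i
  set U : Matrix ι ι 𝕜 := ↑R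
  set V : Matrix ι ι 𝕜 := ↑R⁻¹
  have hUV : U * V = 1 := R.mul_inv
  have hVU : V * U = 1 := R.inv_mul
  rw [← hR] at hUU hUh
  rw [← hUU] at hWH ⊢
  have hVh : Vᴴ = V := by
    rw [← inv_eq_left_inv hVU, conjTranspose_nonsing_inv, hUh]
  have hW_inv : (U * U)⁻¹ = V * V :=
    inv_eq_left_inv (by rw [mul_assoc, ← mul_assoc V U, hVU, one_mul, hVU])
  have hK : (U * H * V).IsHermitian := by
    calc (U * H * V)ᴴ = V * (Hᴴ * (U * U)) * V := by
          rw [conjTranspose_mul, conjTranspose_mul, hUh, hVh]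
          simp [mul_assoc, hUV]
      _ = V * (U * U * H) * V := by rw [hWH]
      _ = U * H * V := by simp [← mul_assoc, hVU]
  have hsum : (∑ i ∈ range ℓ, H ^ i) * (U * U)⁻¹
      = star V * (∑ i ∈ range ℓ, (U * H * V) ^ i) * V := by
    simp only [hconj, mul_sum, sum_mul, hW_inv, star_eq_conjTranspose, hVh]
    simp [← mul_assoc, hVU]
  rw [hsum]
  exact (Units.isUnit R⁻¹).posDef_star_left_conjugate_iff.mpr (hK.posDef_geom_sum hℓ)

theorem posDef_geom_sum_mul_inv_iff {M H : Matrix ι ι 𝕜} (hM : M.IsHermitian) (hMu : IsUnit M)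
    (hMH : M * H = Hᴴ * M) {ℓ : ℕ} (hℓ : Odd ℓ) :
    ((∑ i ∈ range ℓ, H ^ i) * M⁻¹).PosDef ↔ M.PosDef := by
  refine ⟨fun hC ↦ ?_, fun hM ↦ hM.geom_sum_mul_inv hMH hℓ⟩
  set S := ∑ i ∈ range ℓ, H ^ i
  have hMM : M⁻¹ * M = 1 := nonsing_inv_mul M ((isUnit_iff_isUnit_det M).mp hMu)
  have hW : (M * S).PosDef := by
    have := hMu.posDef_star_left_conjugate_iff.mpr hC
    rwa [star_eq_conjTranspose, hM, mul_assoc, mul_assoc, hMM, mul_one] at this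
  have hSH : S * H = H * S := ((Commute.sum_right _ _ _ fun i _ ↦ Commute.self_pow H i).eq).symm
  have hWH : M * S * H = Hᴴ * (M * S) := by rw [mul_assoc, hSH, ← mul_assoc, hMH, mul_assoc]
  have hS : S * (M * S)⁻¹ = M⁻¹ := by
    calc S * (M * S)⁻¹ = M⁻¹ * (M * S * (M * S)⁻¹) := by
          rw [← mul_assoc, ← mul_assoc, hMM, one_mul]
      _ = M⁻¹ := by rw [mul_nonsing_inv _ ((isUnit_iff_isUnit_det _).mp hW.isUnit), mul_one]
  rw [← posDef_inv_iff, ← hS]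
  exact hW.geom_sum_mul_inv hWH hℓ

end Matrix

lemma Matrix.isND_iff_isPD_neg {n : ℕ} (P : Matrix (Fin n) (Fin n) ℝ) : P.IsND ↔ (-P).IsPD := by
  simp [IsND, IsPD, neg_mulVec]

theorem stmt_6_general {n : ℕ} (A M : Matrix (Fin n) (Fin n) ℝ)
    (hA : Aᵀ = A) (hM : Mᵀ = M) (hMinv : IsUnit M)
    (ℓ : ℕ) (hodd : Odd ℓ) :
    (((∑ i ∈ Finset.range ℓ, (M⁻¹ * (M - A)) ^ i) * M⁻¹).IsPD ↔ M.IsPD) ∧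
    (((∑ i ∈ Finset.range ℓ, (M⁻¹ * (M - A)) ^ i) * M⁻¹).IsND ↔ M.IsND) := by
  have hdet : IsUnit M.det := (isUnit_iff_isUnit_det M).mp hMinv
  have hMM : M * M⁻¹ = 1 := mul_nonsing_inv M hdet
  have hMM' : M⁻¹ * M = 1 := nonsing_inv_mul M hdet
  have hMh : M.IsHermitian := by rwa [IsHermitian, conjTranspose_eq_transpose_of_trivial]
  set H := M⁻¹ * (M - A)
  have hHt : Hᴴ = (M - A) * M⁻¹ := by
    rw [conjTranspose_eq_transpose_of_trivial, transpose_mul, transpose_nonsing_inv,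
      transpose_sub, hA, hM]
  have hMH : M * H = Hᴴ * M := by rw [hHt, mul_assoc, hMM', mul_one, ← mul_assoc, hMM, one_mul]
  have hneg_inv : (-M)⁻¹ = -M⁻¹ := inv_eq_left_inv (by rw [neg_mul_neg, hMM'])
  have hPD := posDef_geom_sum_mul_inv_iff hMh hMinv hMH hodd
  have hND := posDef_geom_sum_mul_inv_iff hMh.neg hMinv.neg (by simpa using hMH) hodd
  rw [hneg_inv, mul_neg] at hND
  simp only [isND_iff_isPD_neg, isPD_iff_posDef]
  exact ⟨hPD, hND⟩

theorem stmt_6 {n : ℕ} (A M : Matrix (Fin n) (Fin n) ℝ)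
    (hA : Aᵀ = A) (hM : Mᵀ = M) (hMinv : IsUnit M)
    (ℓ : ℕ) (hodd : Odd ℓ) (hℓ : 1 ≤ ℓ) :
    (((∑ i ∈ Finset.range ℓ, (M⁻¹ * (M - A)) ^ i) * M⁻¹).IsPD ↔ M.IsPD) ∧
    (((∑ i ∈ Finset.range ℓ, (M⁻¹ * (M - A)) ^ i) * M⁻¹).IsND ↔ M.IsND) :=
  stmt_6_general A M hA hM hMinv ℓ hodd
end

section
/- Let A be a real symmetric n×n matrix (not necessarily nonsingular), M a real symmetric invertible n×n matrix, N := M − A, H := M⁻¹N, and for ℓ ≥ 1 let C^(ℓ) := ∑_{i=0}^{ℓ−1} Hⁱ M⁻¹. If ℓ is even (ℓ ≥ 2), then C^(ℓ) is positive definite if and only if M + N is positive definite, and C^(ℓ) is negative definite if and only if M + N is negative definite. -/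
/-!
With `ℓ = 2m`, the geometric sum factors as `(∑_{j<m} H^{2j}) (1 + H)`, and
`(1 + H) M⁻¹ = M⁻¹ (M + N) M⁻¹ =: T`, so `C^(ℓ) = q T` with `q = ∑_{j<m} H^{2j}`; moreover `H` is
self-adjoint for `T` in the sense `H T = T Hᵀ`. For any such pair, `q T` is positive definite iff
`T` is: if `T ≻ 0` then `H^{2j} T = H^j T (H^j)ᵀ` exhibits `q T` as `T` plus positive
semidefinite terms; conversely, if `D = q T ≻ 0` then `Hᵀ` is self-adjoint for `D⁻¹`, so the same
argument gives `qᵀ D⁻¹ ≻ 0`, and `T = (qᵀ D⁻¹)⁻¹`. Finally `T` is congruent to `M + N`, and the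
negative definite case is the positive definite one for `-(M + N)`.
-/

open Matrix

theorem Finset.geom_sum_two_mul {R : Type*} [Semiring R] (x : R) (m : ℕ) :
    ∑ i ∈ range (2 * m), x ^ i = (∑ j ∈ range m, x ^ (2 * j)) * (1 + x) := by
  induction m with
  | zero => simp
  | succ m ih =>
    rw [mul_add_one, sum_range_succ, sum_range_succ, sum_range_succ, ih, add_mul, mul_one_add,
      mul_one_add, ← pow_succ, add_assoc]

namespace Matrix

theorem isPD_iff_posDef_s7 {n : ℕ} {P : Matrix (Fin n) (Fin n) ℝ} : P.IsPD ↔ P.PosDef := by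
  simp [IsPD, posDef_iff_dotProduct_mulVec, IsHermitian]

theorem isND_iff_posDef_neg_s7 {n : ℕ} {P : Matrix (Fin n) (Fin n) ℝ} : P.IsND ↔ (-P).PosDef := by
  simp [IsND, posDef_iff_dotProduct_mulVec, IsHermitian, neg_mulVec]

section

variable {ι K : Type*} [Fintype ι] [DecidableEq ι] [Field K] [PartialOrder K] [StarRing K]
  [AddLeftMono K]

theorem PosDef.sum_pow_two_mul_mul {B S : Matrix ι ι K} (hS : S.PosDef)
    (hBS : SemiconjBy S Bᴴ B) {m : ℕ} (hm : 0 < m) :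
    ((∑ j ∈ Finset.range m, B ^ (2 * j)) * S).PosDef := by
  have hterm (j : ℕ) : B ^ (2 * j) * S = B ^ j * S * (B ^ j)ᴴ := by
    rw [two_mul, pow_add, mul_assoc, conjTranspose_pow, mul_assoc, (hBS.pow_right j).eq]
  obtain ⟨k, rfl⟩ := Nat.exists_eq_add_of_lt hm
  rw [Finset.sum_mul, Finset.sum_congr rfl fun j _ => hterm j, zero_add,
    Finset.sum_range_succ']
  exact .posSemidef_add
    (posSemidef_sum _ fun j _ => hS.posSemidef.mul_mul_conjTranspose_same (B ^ (j + 1)))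
    (by simpa using hS)

theorem posDef_sum_pow_two_mul_mul_iff {B S : Matrix ι ι K} (hBS : SemiconjBy S Bᴴ B) {m : ℕ}
    (hm : 0 < m) : ((∑ j ∈ Finset.range m, B ^ (2 * j)) * S).PosDef ↔ S.PosDef := by
  refine ⟨fun hD => ?_, fun hS => hS.sum_pow_two_mul_mul hBS hm⟩
  set q := ∑ j ∈ Finset.range m, B ^ (2 * j)
  set q' := ∑ j ∈ Finset.range m, Bᴴ ^ (2 * j)
  have hDB : SemiconjBy (q * S) Bᴴ B :=
    SemiconjBy.mul_left (Commute.sum_left _ _ _ fun j _ => (Commute.refl B).pow_left _) hBS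
  have hPB : SemiconjBy (q * S)⁻¹ B Bᴴ := by
    obtain ⟨U, hU⟩ := hD.isUnit
    rw [← hU] at hDB ⊢
    rw [← coe_units_inv]
    exact hDB.units_inv_symm_left
  have hP : (q' * (q * S)⁻¹).PosDef :=
    hD.inv.sum_pow_two_mul_mul (by rwa [conjTranspose_conjTranspose]) hm
  have hSq : S * q' = q * S := by
    rw [Finset.mul_sum, Finset.sum_mul]
    exact Finset.sum_congr rfl fun j _ => (hBS.pow_right (2 * j)).eq
  have hinv : S * (q' * (q * S)⁻¹) = 1 := by
    rw [← mul_assoc, hSq, mul_nonsing_inv _ ((isUnit_iff_isUnit_det _).mp hD.isUnit)]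
  rw [← inv_eq_left_inv hinv]
  exact hP.inv

end

end Matrix

theorem stmt_7 {n : ℕ} (A M : Matrix (Fin n) (Fin n) ℝ)
    (hA : Aᵀ = A) (hM : Mᵀ = M) (hMinv : IsUnit M)
    (ℓ : ℕ) (heven : Even ℓ) (hℓ : 2 ≤ ℓ) :
    (((∑ i ∈ Finset.range ℓ, (M⁻¹ * (M - A)) ^ i) * M⁻¹).IsPD ↔ (M + (M - A)).IsPD) ∧
    (((∑ i ∈ Finset.range ℓ, (M⁻¹ * (M - A)) ^ i) * M⁻¹).IsND ↔ (M + (M - A)).IsND) := by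
  obtain ⟨m, rfl⟩ := heven
  set N := M - A
  set H := M⁻¹ * N
  have hMdet : IsUnit M.det := (isUnit_iff_isUnit_det M).mp hMinv
  have hMi : (M⁻¹)ᴴ = M⁻¹ := by
    rw [conjTranspose_nonsing_inv, conjTranspose_eq_transpose_of_trivial, hM]
  have hNh : Nᴴ = N := by
    rw [conjTranspose_eq_transpose_of_trivial, transpose_sub, hA, hM]
  have hcongr (X : Matrix (Fin n) (Fin n) ℝ) : (M⁻¹ * X * M⁻¹).PosDef ↔ X.PosDef := by
    rw [← (isUnit_nonsing_inv_iff.mpr hMinv).posDef_star_left_conjugate_iff (x := X),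
      star_eq_conjTranspose, hMi]
  have hC : (∑ i ∈ Finset.range (m + m), H ^ i) * M⁻¹
      = (∑ j ∈ Finset.range m, H ^ (2 * j)) * (M⁻¹ * (M + N) * M⁻¹) := by
    rw [← two_mul, Finset.geom_sum_two_mul, mul_assoc, mul_add, nonsing_inv_mul _ hMdet]
  -- both sides expand to `M⁻¹ (N + N M⁻¹ N) M⁻¹`
  have hHT : SemiconjBy (M⁻¹ * (M + N) * M⁻¹) Hᴴ H := by
    simp only [SemiconjBy, H, conjTranspose_mul, hMi, hNh, mul_add, add_mul, mul_assoc,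
      nonsing_inv_mul_cancel_left _ _ hMdet]
  have hm : 0 < m := by omega
  constructor
  · rw [isPD_iff_posDef_s7, isPD_iff_posDef_s7, hC, posDef_sum_pow_two_mul_mul_iff hHT hm, hcongr]
  · rw [isND_iff_posDef_neg_s7, isND_iff_posDef_neg_s7, hC, ← mul_neg,
      posDef_sum_pow_two_mul_mul_iff hHT.neg_left hm, ← neg_mul, ← mul_neg, hcongr]
end

section
/- Let A be a real symmetric n×n matrix, M a real symmetric invertible n×n matrix, N := M − A, H := M⁻¹N, and for ℓ ≥ 1 let C^(ℓ) := ∑_{i=0}^{ℓ−1} Hⁱ M⁻¹. Let ρ(H) denote the spectral radius of H (the supremum of the moduli of the elements of the spectrum of H viewed as a complex matrix). Then every eigenvalue μ of C^(ℓ)·A (an element of the spectrum of C^(ℓ)·A viewed as a complex matrix) satisfies |1 − μ| ≤ ρ(H)^ℓ. -/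
/-!
Since `M⁻¹ A = 1 - H`, the geometric sum telescopes: `C^(ℓ) A = (∑_{i<ℓ} Hⁱ)(1 - H) = 1 - H^ℓ`.
By spectral mapping over `ℂ`, every eigenvalue of `1 - H^ℓ` has the form `1 - ν^ℓ` with `ν` an
eigenvalue of `H`, and `|ν^ℓ| ≤ ρ(H)^ℓ`.
-/

open Matrix

namespace spectrum

variable {𝕜 A : Type*} [Field 𝕜] [Ring A] [Algebra 𝕜 A]

theorem one_sub_mem_of_mem_one_sub {a : A} {μ : 𝕜} (h : μ ∈ spectrum 𝕜 (1 - a)) :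
    1 - μ ∈ spectrum 𝕜 a := by
  rw [← map_one (algebraMap 𝕜 A), ← singleton_sub_eq] at h
  obtain ⟨_, rfl, ν, hν, rfl⟩ := h
  simpa using hν

theorem exists_pow_eq_of_mem_pow [IsAlgClosed 𝕜] [FiniteDimensional 𝕜 A] {a : A} {k : ℕ}
    {μ : 𝕜} (h : μ ∈ spectrum 𝕜 (a ^ k)) : ∃ ν ∈ spectrum 𝕜 a, ν ^ k = μ := by
  have : Nontrivial A := by
    by_contra hA
    rw [not_nontrivial_iff_subsingleton] at hA
    simp [of_subsingleton] at h
  rwa [map_pow_of_nonempty (nonempty_of_isAlgClosed_of_finiteDimensional 𝕜 a)] at h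

end spectrum

namespace Matrix

variable {ι : Type*} [Fintype ι] [DecidableEq ι]

theorem geom_sum_inv_mul_sub_mul_inv_mul {R : Type*} [CommRing R] {A M : Matrix ι ι R}
    (hM : IsUnit M.det) (ℓ : ℕ) :
    (∑ i ∈ Finset.range ℓ, (M⁻¹ * (M - A)) ^ i) * M⁻¹ * A = 1 - (M⁻¹ * (M - A)) ^ ℓ := by
  have hMA : M⁻¹ * A = 1 - M⁻¹ * (M - A) := by
    rw [Matrix.mul_sub, nonsing_inv_mul M hM, sub_sub_cancel]
  rw [Matrix.mul_assoc, hMA, geom_sum_mul_neg]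

theorem norm_le_sSup_norm_spectrum (Y : Matrix ι ι ℂ) {ν : ℂ} (hν : ν ∈ spectrum ℂ Y) :
    ‖ν‖ ≤ sSup (norm '' spectrum ℂ Y) :=
  le_csSup ((finite_spectrum Y).image _).bddAbove ⟨ν, hν, rfl⟩

theorem norm_one_sub_le_of_mem_spectrum_one_sub_pow (Y : Matrix ι ι ℂ) {ℓ : ℕ} {μ : ℂ}
    (hμ : μ ∈ spectrum ℂ (1 - Y ^ ℓ)) : ‖1 - μ‖ ≤ sSup (norm '' spectrum ℂ Y) ^ ℓ := by
  obtain ⟨ν, hν, hνμ⟩ :=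
    spectrum.exists_pow_eq_of_mem_pow (spectrum.one_sub_mem_of_mem_one_sub hμ)
  rw [← hνμ, norm_pow]
  exact pow_le_pow_left₀ (norm_nonneg ν) (Y.norm_le_sSup_norm_spectrum hν) ℓ

end Matrix

theorem stmt_10_general {n : ℕ} (A M : Matrix (Fin n) (Fin n) ℝ)
    (hMinv : IsUnit M)
    (ℓ : ℕ) :
    ∀ μ ∈ spectrum ℂ
        ((((∑ i ∈ Finset.range ℓ, (M⁻¹ * (M - A)) ^ i) * M⁻¹) * A).map Complex.ofReal),
      ‖1 - μ‖ ≤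
        (sSup ((fun z : ℂ => ‖z‖) '' spectrum ℂ ((M⁻¹ * (M - A)).map Complex.ofReal))) ^ ℓ := by
  intro μ hμ
  set H := M⁻¹ * (M - A)
  have hcomplexify : (1 - H ^ ℓ).map Complex.ofReal = 1 - H.map Complex.ofReal ^ ℓ := by
    have h := map_sub Complex.ofRealHom.mapMatrix 1 (H ^ ℓ)
    rwa [map_one, map_pow] at h
  rw [geom_sum_inv_mul_sub_mul_inv_mul ((isUnit_iff_isUnit_det M).mp hMinv), hcomplexify] at hμ
  exact norm_one_sub_le_of_mem_spectrum_one_sub_pow _ hμ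

theorem stmt_10 {n : ℕ} (A M : Matrix (Fin n) (Fin n) ℝ)
    (hA : Aᵀ = A) (hM : Mᵀ = M) (hMinv : IsUnit M)
    (ℓ : ℕ) (hℓ : 1 ≤ ℓ) :
    ∀ μ ∈ spectrum ℂ
        ((((∑ i ∈ Finset.range ℓ, (M⁻¹ * (M - A)) ^ i) * M⁻¹) * A).map Complex.ofReal),
      ‖1 - μ‖ ≤
        (sSup ((fun z : ℂ => ‖z‖) '' spectrum ℂ ((M⁻¹ * (M - A)).map Complex.ofReal))) ^ ℓ :=
  stmt_10_general A M hMinv ℓ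
end

section
/- Let A = L + D + Lᵀ be a real symmetric n×n matrix, where L is strictly lower triangular and D is diagonal with positive diagonal entries, and let D^{−1/2} be the diagonal matrix with entries (D_ii)^{−1/2}. Let μ := λ_min(D^{−1/2}(L + Lᵀ)D^{−1/2}) + 1, where λ_min is the least element of the real spectrum of the symmetric matrix D^{−1/2}(L + Lᵀ)D^{−1/2}. For ω ∈ ℝ with ω ≠ 0 and ω ≠ 2, let M(ω) := ω⁻¹(2−ω)⁻¹ (D + ωL) D⁻¹ (D + ωLᵀ), N(ω) := M(ω) − A, H(ω) := M(ω)⁻¹N(ω), and for even ℓ ≥ 2 let C^(ℓ)(ω) := ∑_{i=0}^{ℓ−1} H(ω)ⁱ M(ω)⁻¹. If μ ≥ 1/2 and 0 < ω < 2, then C^(ℓ)(ω) is symmetric positive definite. -/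
open Matrix

/-- The diagonal matrix `D^{-1/2}` with entries `(D_ii)^{-1/2}`. -/
noncomputable def dhalf {n : ℕ} (D : Matrix (Fin n) (Fin n) ℝ) :
    Matrix (Fin n) (Fin n) ℝ :=
  Matrix.diagonal fun i => (Real.sqrt (D i i))⁻¹

/-- The SSOR splitting matrix `M(ω) = ω⁻¹(2-ω)⁻¹ (D + ωL) D⁻¹ (D + ωLᵀ)`. -/
noncomputable def ssorM {n : ℕ} (L D : Matrix (Fin n) (Fin n) ℝ) (ω : ℝ) :
    Matrix (Fin n) (Fin n) ℝ :=
  (ω⁻¹ * (2 - ω)⁻¹) • ((D + ω • L) * D⁻¹ * (D + ω • Lᵀ))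

/-- The SSOR inner-iteration preconditioning matrix
`C^(ℓ)(ω) = ∑_{i=0}^{ℓ-1} H(ω)ⁱ M(ω)⁻¹`, where `A = L + D + Lᵀ`,
`N(ω) = M(ω) - A` and `H(ω) = M(ω)⁻¹ N(ω)`. -/
noncomputable def ssorC {n : ℕ} (L D : Matrix (Fin n) (Fin n) ℝ) (ω : ℝ) (ℓ : ℕ) :
    Matrix (Fin n) (Fin n) ℝ :=
  (∑ i ∈ Finset.range ℓ,
      ((ssorM L D ω)⁻¹ * (ssorM L D ω - (L + D + Lᵀ))) ^ i) * (ssorM L D ω)⁻¹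

open Finset
open scoped ComplexOrder MatrixOrder

/-!
Write `N = M - A` and `H = M⁻¹N`. Since `2M - A = M + N`, the matrix `S = M⁻¹(2M - A)M⁻¹` equals
`(1 + H)M⁻¹`, and as `N` and `M` are symmetric, `Hʲ S (Hʲ)ᵀ = (H²ʲ + H²ʲ⁺¹)M⁻¹`. Hence for
`ℓ = 2m` the preconditioner is the congruence sum `C^(ℓ) = ∑_{j<m} Hʲ S (Hʲ)ᵀ`, which is positive
definite whenever `M` is symmetric and invertible and `2M - A` is positive definite.

For SSOR, `M` is a positive multiple of `(D + ωL) D⁻¹ (D + ωL)ᵀ` with `D + ωL` invertible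
(triangular), and
`2M - A = ω/(2-ω) (L + Lᵀ + D/2) + (2-ω)/(2ω) D + 2ω/(2-ω) L D⁻¹ Lᵀ`.
The hypothesis `μ ≥ 1/2` says `D^{-1/2}(L + Lᵀ)D^{-1/2} + I/2 ⪰ 0`; congruence by `D^{1/2}` makes
the first term positive semidefinite, and the second is positive definite.
-/

theorem Finset.sum_range_two_mul {M : Type*} [AddCommMonoid M] (f : ℕ → M) (m : ℕ) :
    ∑ i ∈ range (2 * m), f i = ∑ j ∈ range m, (f (2 * j) + f (2 * j + 1)) := by
  induction m with
  | zero => simp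
  | succ k ih => rw [Nat.mul_succ, sum_range_succ, sum_range_succ, ih, sum_range_succ, add_assoc]

namespace Matrix

variable {ι 𝕜 : Type*} [DecidableEq ι] [RCLike 𝕜]

lemma IsDiag.posDef {D : Matrix ι ι 𝕜} (hD : D.IsDiag) (hDpos : ∀ i, 0 < D i i) : D.PosDef :=
  hD.diagonal_diag ▸ posDef_diagonal_iff.2 hDpos

variable [Fintype ι]

lemma IsDiag.isUnit_add_smul [LinearOrder ι] {K : Type*} [Field K] {D L : Matrix ι ι K}
    (hD : D.IsDiag) (hD0 : ∀ i, D i i ≠ 0) (hL : ∀ i j, i ≤ j → L i j = 0) (c : K) :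
    IsUnit (D + c • L) := by
  have hlower : (D + c • L).IsLowerTriangular := fun i j (hij : i < j) => by
    simp [hD hij.ne, hL i j hij.le]
  rw [isUnit_iff_isUnit_det, det_of_isLowerTriangular _ hlower]
  exact (Finset.prod_ne_zero_iff.2 fun i _ => by simpa [hL i i le_rfl] using hD0 i).isUnit

lemma IsHermitian.posSemidef_sub_smul_one_of_le_spectrum {B : Matrix ι ι 𝕜} (hB : B.IsHermitian)
    {r : ℝ} (h : ∀ x ∈ spectrum ℝ B, r ≤ x) : (B - r • 1).PosSemidef := by
  simpa [Matrix.le_iff, Algebra.algebraMap_eq_smul_one] using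
    (algebraMap_le_iff_le_spectrum (A := Matrix ι ι 𝕜) (ha := hB.isSelfAdjoint)).2 h

lemma PosDef.isPD {n : ℕ} {P : Matrix (Fin n) (Fin n) ℝ} (hP : P.PosDef) : P.IsPD := by
  obtain ⟨hsymm, hpos⟩ := posDef_iff_dotProduct_mulVec.1 hP
  exact ⟨hsymm, fun v hv => by simpa using hpos hv⟩

variable {M A : Matrix ι ι 𝕜}

lemma conjTranspose_inv_mul_sub_pow (hM : M.IsHermitian) (hA : A.IsHermitian) (j : ℕ) :
    ((M⁻¹ * (M - A)) ^ j)ᴴ = ((M - A) * M⁻¹) ^ j := by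
  rw [conjTranspose_pow, conjTranspose_mul, (hM.sub hA).eq, hM.inv.eq]

lemma inv_mul_sub_pow_mul_conjTranspose (hM : M.IsHermitian) (hA : A.IsHermitian)
    (hMu : IsUnit M) (j : ℕ) :
    (M⁻¹ * (M - A)) ^ j * (M⁻¹ * ((2 : 𝕜) • M - A) * M⁻¹) * ((M⁻¹ * (M - A)) ^ j)ᴴ =
      ((M⁻¹ * (M - A)) ^ (2 * j) + (M⁻¹ * (M - A)) ^ (2 * j + 1)) * M⁻¹ := by
  set H := M⁻¹ * (M - A)
  have hS : M⁻¹ * ((2 : 𝕜) • M - A) * M⁻¹ = (1 + H) * M⁻¹ := by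
    rw [two_smul, add_sub_assoc, Matrix.mul_add,
      nonsing_inv_mul M ((isUnit_iff_isUnit_det M).1 hMu)]
  rw [conjTranspose_inv_mul_sub_pow hM hA, hS]
  calc H ^ j * ((1 + H) * M⁻¹) * ((M - A) * M⁻¹) ^ j
      = H ^ j * (1 + H) * (M⁻¹ * ((M - A) * M⁻¹) ^ j) := by simp only [Matrix.mul_assoc]
    _ = H ^ j * (1 + H) * H ^ j * M⁻¹ := by
      rw [← mul_pow_mul]; simp only [Matrix.mul_assoc]; rfl
    _ = (H ^ (2 * j) + H ^ (2 * j + 1)) * M⁻¹ := by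
      rw [mul_one_add, Matrix.add_mul, ← pow_succ, ← pow_add, ← pow_add, two_mul, add_right_comm]

theorem posDef_sum_range_inv_mul_sub_pow_mul_inv (hM : M.IsHermitian) (hA : A.IsHermitian)
    (hMu : IsUnit M) (h2MA : ((2 : 𝕜) • M - A).PosDef) {ℓ : ℕ} (heven : Even ℓ) (hℓ : ℓ ≠ 0) :
    ((∑ i ∈ range ℓ, (M⁻¹ * (M - A)) ^ i) * M⁻¹).PosDef := by
  obtain ⟨m, rfl⟩ := heven
  obtain ⟨k, rfl⟩ : ∃ k, m = k + 1 := Nat.exists_eq_succ_of_ne_zero (by omega)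
  have hS : (M⁻¹ * ((2 : 𝕜) • M - A) * M⁻¹).PosDef := by
    simpa [hM.inv.eq] using h2MA.conjTranspose_mul_mul_same
      (mulVec_injective_of_isUnit ((isUnit_nonsing_inv_iff).2 hMu))
  rw [← two_mul, sum_range_two_mul, sum_mul, sum_range_succ']
  simp only [← inv_mul_sub_pow_mul_conjTranspose hM hA hMu]
  refine .posSemidef_add (posSemidef_sum _ fun j _ => hS.posSemidef.mul_mul_conjTranspose_same _) ?_
  simpa using hS

end Matrix

section SSOR

variable {n : ℕ} {L D : Matrix (Fin n) (Fin n) ℝ}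

lemma posSemidef_sub_smul_of_le_spectrum_dhalf {K : Matrix (Fin n) (Fin n) ℝ}
    (hK : K.IsHermitian) (hD : D.IsDiag) (hDpos : ∀ i, 0 < D i i) {r : ℝ}
    (h : ∀ x ∈ spectrum ℝ (dhalf D * K * dhalf D), r ≤ x) : (K - r • D).PosSemidef := by
  set S : Matrix (Fin n) (Fin n) ℝ := diagonal fun i => √(D i i)
  have hSd : S * dhalf D = 1 := by
    simp [S, dhalf, (Real.sqrt_pos.2 (hDpos _)).ne']
  have hdS : dhalf D * S = 1 := by
    simp [S, dhalf, (Real.sqrt_pos.2 (hDpos _)).ne']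
  have hSS : S * S = D := by
    rw [diagonal_mul_diagonal]
    exact (congrArg diagonal (funext fun i => Real.mul_self_sqrt (hDpos i).le)).trans
      hD.diagonal_diag
  have hB : (dhalf D * K * dhalf D).IsHermitian := by
    simpa [dhalf] using isHermitian_conjTranspose_mul_mul (dhalf D) hK
  have hconj : S * (dhalf D * K * dhalf D - r • 1) * Sᴴ = K - r • D := by
    rw [show Sᴴ = S by simp [S], Matrix.mul_sub, Matrix.sub_mul, mul_smul_comm, smul_mul_assoc,
      Matrix.mul_one, hSS, ← Matrix.mul_assoc, ← Matrix.mul_assoc, hSd, Matrix.one_mul,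
      Matrix.mul_assoc, hdS, Matrix.mul_one]
  exact hconj ▸ (hB.posSemidef_sub_smul_one_of_le_spectrum h).mul_mul_conjTranspose_same S

lemma posDef_ssorM (hL : ∀ i j, i ≤ j → L i j = 0) (hD : D.IsDiag) (hDpos : ∀ i, 0 < D i i)
    {ω : ℝ} (hω0 : 0 < ω) (hω2 : ω < 2) : (ssorM L D ω).PosDef := by
  have hDPD : D.PosDef := hD.posDef hDpos
  have hT : (D + ω • L)ᴴ = D + ω • Lᵀ := by
    rw [conjTranspose_add, conjTranspose_smul, hDPD.isHermitian.eq, star_trivial,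
      conjTranspose_eq_transpose_of_trivial]
  rw [ssorM, ← hT]
  refine (hDPD.inv.mul_mul_conjTranspose_same (vecMul_injective_of_isUnit ?_)).smul
    (by positivity : 0 < ω⁻¹ * (2 - ω)⁻¹)
  exact hD.isUnit_add_smul (fun i => (hDpos i).ne') hL ω

lemma two_smul_ssorM_sub (hD : IsUnit D.det) {ω : ℝ} (hω0 : ω ≠ 0) (hω2 : ω ≠ 2) :
    (2 : ℝ) • ssorM L D ω - (L + D + Lᵀ) =
      (ω / (2 - ω)) • (L + Lᵀ + (1 / 2 : ℝ) • D) + ((2 - ω) / (2 * ω)) • D +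
        (2 * ω / (2 - ω)) • (L * D⁻¹ * Lᵀ) := by
  have hprod : (D + ω • L) * D⁻¹ * (D + ω • Lᵀ) =
      D + ω • L + ω • Lᵀ + (ω * ω) • (L * D⁻¹ * Lᵀ) := by
    simp only [Matrix.add_mul, Matrix.mul_add, smul_mul_assoc, mul_smul_comm, smul_add, smul_smul,
      mul_nonsing_inv D hD, Matrix.one_mul, Matrix.mul_assoc L D⁻¹ D, nonsing_inv_mul D hD,
      Matrix.mul_one]
    abel
  have h2ω : 2 - ω ≠ 0 := sub_ne_zero.2 (Ne.symm hω2)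
  rw [ssorM, hprod]
  match_scalars <;> field_simp <;> ring

end SSOR

theorem stmt_14_general {n : ℕ} (L D : Matrix (Fin n) (Fin n) ℝ)
    (hL : ∀ i j : Fin n, i ≤ j → L i j = 0)
    (hD : D.IsDiag) (hDpos : ∀ i, 0 < D i i)
    -- `lmin` is the least element of the real spectrum of `D^{-1/2}(L + Lᵀ)D^{-1/2}`,
    -- so that `μ = lmin + 1`
    (lmin : ℝ)
    (hmin : ∀ lam ∈ spectrum ℝ (dhalf D * (L + Lᵀ) * dhalf D), lmin ≤ lam)
    (ω : ℝ)
    (ℓ : ℕ) (heven : Even ℓ) (hℓ : 2 ≤ ℓ)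
    (hmu : 1 / 2 ≤ lmin + 1) (hω : 0 < ω ∧ ω < 2) :
    (ssorC L D ω ℓ).IsPD := by
  obtain ⟨hω0, hω2⟩ := hω
  have hDPD : D.PosDef := hD.posDef hDpos
  have hA : (L + D + Lᵀ).IsHermitian := by
    rw [IsHermitian, conjTranspose_eq_transpose_of_trivial]
    simp only [transpose_add, transpose_transpose, hD.isSymm.eq]
    abel
  have hK : (L + Lᵀ + (1 / 2 : ℝ) • D).PosSemidef := by
    have hLL : (L + Lᵀ).IsHermitian := by
      simp [IsHermitian, conjTranspose_eq_transpose_of_trivial, add_comm]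
    convert (posSemidef_sub_smul_of_le_spectrum_dhalf hLL hD hDpos hmin).add
      (hDPD.posSemidef.smul (by linarith : 0 ≤ lmin + 1 / 2)) using 1
    module
  have hM := posDef_ssorM hL hD hDpos hω0 hω2
  have hG : ((2 : ℝ) • ssorM L D ω - (L + D + Lᵀ)).PosDef := by
    have h2ω : 0 < 2 - ω := by linarith
    rw [two_smul_ssorM_sub hDPD.det_pos.ne'.isUnit hω0.ne' hω2.ne]
    refine .add_posSemidef (.posSemidef_add (hK.smul ?_) (hDPD.smul ?_))
      ((hDPD.inv.posSemidef.mul_mul_conjTranspose_same L).smul ?_) <;> positivity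
  exact (posDef_sum_range_inv_mul_sub_pow_mul_inv hM.isHermitian hA hM.isUnit hG heven
    (by omega)).isPD

theorem stmt_14 {n : ℕ} (L D : Matrix (Fin n) (Fin n) ℝ)
    (hL : ∀ i j : Fin n, i ≤ j → L i j = 0)
    (hD : D.IsDiag) (hDpos : ∀ i, 0 < D i i)
    -- `lmin` is the least element of the real spectrum of `D^{-1/2}(L + Lᵀ)D^{-1/2}`,
    -- so that `μ = lmin + 1`
    (lmin : ℝ)
    (hmem : lmin ∈ spectrum ℝ (dhalf D * (L + Lᵀ) * dhalf D))
    (hmin : ∀ lam ∈ spectrum ℝ (dhalf D * (L + Lᵀ) * dhalf D), lmin ≤ lam)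
    (ω : ℝ) (hω0 : ω ≠ 0) (hω2 : ω ≠ 2)
    (ℓ : ℕ) (heven : Even ℓ) (hℓ : 2 ≤ ℓ)
    (hmu : 1 / 2 ≤ lmin + 1) (hω : 0 < ω ∧ ω < 2) :
    (ssorC L D ω ℓ).IsPD :=
  stmt_14_general L D hL hD hDpos lmin hmin ω ℓ heven hℓ hmu hω
end

section
/- Let A = L + D + Lᵀ be a real symmetric n×n matrix, where L is strictly lower triangular and D is diagonal with positive diagonal entries, and let D^{−1/2} be the diagonal matrix with entries (D_ii)^{−1/2}. Let μ := λ_min(D^{−1/2}(L + Lᵀ)D^{−1/2}) + 1, where λ_min is the least element of the real spectrum of the symmetric matrix D^{−1/2}(L + Lᵀ)D^{−1/2}. For ω ∈ ℝ with ω ≠ 0 and ω ≠ 2, let M(ω) := ω⁻¹(2−ω)⁻¹ (D + ωL) D⁻¹ (D + ωLᵀ), N(ω) := M(ω) − A, H(ω) := M(ω)⁻¹N(ω), and for even ℓ ≥ 2 let C^(ℓ)(ω) := ∑_{i=0}^{ℓ−1} H(ω)ⁱ M(ω)⁻¹. If either (i) μ < 1/2, μ ≠ 0, and 0 < ω < (1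 − √(1 − 2μ))/μ, or (ii) μ = 0 and 0 < ω < 1, then C^(ℓ)(ω) is symmetric positive definite. -/
open Matrix

/-!
With `H = M⁻¹N` and `K = M⁻¹(M + N)M⁻¹ = M⁻¹ + H M⁻¹`, the symmetry of `M` and `A` gives
`K Hᵀ = H K`, hence `C^(2m) = ∑_{j<m} H^(2j) K = ∑_{j<m} H^j K (H^j)ᵀ`: an even-step inner-iteration
preconditioner is SPD as soon as `M + N = 2M - A` is. For SSOR, `ω(2 - ω)(2M - A)` equals
`(2 - 2ω + ω²) D + ω² (L + Lᵀ) + 2ω² L D⁻¹ Lᵀ`, whose quadratic form is at least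
`(μω² - 2ω + 2) vᵀDv` by the choice of `λ_min`, and the conditions on `ω` are exactly what makes
`μω² - 2ω + 2` positive. `M` itself is SPD because `D + ωL` is lower triangular with diagonal `D`.
-/

open Finset
open scoped ComplexOrder

theorem Matrix.PosDef.isPD_s15 {n : ℕ} {P : Matrix (Fin n) (Fin n) ℝ} (hP : P.PosDef) : P.IsPD :=
  ⟨(isHermitian_iff_isSymm.mp hP.isHermitian).eq,
    fun _ hv => by simpa using hP.dotProduct_mulVec_pos hv⟩

theorem geom_sum_range_two_mul {R : Type*} [Semiring R] (h : R) (m : ℕ) :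
    ∑ i ∈ range (2 * m), h ^ i = ∑ j ∈ range m, h ^ (2 * j) * (1 + h) := by
  induction m with
  | zero => simp
  | succ m ih =>
    rw [Nat.mul_succ, sum_range_succ, sum_range_succ, ih, sum_range_succ, mul_add, mul_one,
      pow_succ, add_assoc]

namespace Matrix

theorem IsHermitian.mul_dotProduct_le {ι κ : Type*} [Fintype ι] [DecidableEq ι] [Fintype κ]
    {S : Matrix ι ι ℝ} (hS : S.IsHermitian) {c : ℝ} (hc : ∀ x ∈ spectrum ℝ S, c ≤ x)
    (E : Matrix ι κ ℝ) (v : κ → ℝ) :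
    c * (v ⬝ᵥ ((Eᵀ * E) *ᵥ v)) ≤ v ⬝ᵥ ((Eᵀ * S * E) *ᵥ v) := by
  have hpsd : (S - algebraMap ℝ _ c).PosSemidef := by
    rw [posSemidef_iff_isHermitian_and_spectrum_nonneg, ← spectrum.sub_singleton_eq]
    refine ⟨hS.sub (by simp [IsHermitian, Algebra.algebraMap_eq_smul_one]), ?_⟩
    rintro _ ⟨x, hx, _, rfl, rfl⟩
    simpa using hc x hx
  simpa [Algebra.algebraMap_eq_smul_one, Matrix.mul_sub, Matrix.sub_mul, Matrix.mul_smul,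
    Matrix.smul_mul, sub_mulVec, smul_mulVec, mul_comm c]
    using (hpsd.conjTranspose_mul_mul_same E).dotProduct_mulVec_nonneg v

section InnerIteration

variable {ι : Type*} [Fintype ι] [DecidableEq ι] {𝕜 : Type*} [RCLike 𝕜] {M A : Matrix ι ι 𝕜}

theorem inv_mul_add_sub_mul_inv (hM : IsUnit M) :
    M⁻¹ * (M + (M - A)) * M⁻¹ = M⁻¹ + M⁻¹ * (M - A) * M⁻¹ := by
  rw [mul_add, add_mul, nonsing_inv_mul M ((isUnit_iff_isUnit_det M).mp hM), one_mul]

theorem conjTranspose_inv_mul_sub (hM : M.IsHermitian) (hA : A.IsHermitian) :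
    (M⁻¹ * (M - A))ᴴ = (M - A) * M⁻¹ := by
  rw [conjTranspose_mul, conjTranspose_sub, conjTranspose_nonsing_inv, hM.eq, hA.eq]

theorem inv_mul_sub_pow_two_mul_mul_eq (hM : M.IsHermitian) (hMu : IsUnit M) (hA : A.IsHermitian) (j : ℕ) :
    (M⁻¹ * (M - A)) ^ (2 * j) * (M⁻¹ * (M + (M - A)) * M⁻¹) =
      (M⁻¹ * (M - A)) ^ j * (M⁻¹ * (M + (M - A)) * M⁻¹) * ((M⁻¹ * (M - A)) ^ j)ᴴ := by
  set H := M⁻¹ * (M - A)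
  set K := M⁻¹ * (M + (M - A)) * M⁻¹
  have hcomm : K * Hᴴ = H * K := by
    simp only [K, H, inv_mul_add_sub_mul_inv hMu, conjTranspose_inv_mul_sub hM hA]
    noncomm_ring
  have hpow : ∀ k : ℕ, K * Hᴴ ^ k = H ^ k * K := fun k => SemiconjBy.pow_right hcomm k
  rw [conjTranspose_pow, mul_assoc (H ^ j), hpow, two_mul, pow_add, mul_assoc]

theorem posDef_sum_range_pow_mul_inv (hM : M.IsHermitian) (hMu : IsUnit M) (hA : A.IsHermitian)
    (hG : (M + (M - A)).PosDef) {m : ℕ} (hm : 0 < m) :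
    ((∑ i ∈ range (2 * m), (M⁻¹ * (M - A)) ^ i) * M⁻¹).PosDef := by
  set H := M⁻¹ * (M - A)
  set K := M⁻¹ * (M + (M - A)) * M⁻¹
  have hK : K.PosDef := by
    have := hG.mul_mul_conjTranspose_same (B := M⁻¹)
      (vecMul_injective_iff_isUnit.mpr (isUnit_nonsing_inv_iff.mpr hMu))
    rwa [conjTranspose_nonsing_inv, hM.eq] at this
  have hsum : (∑ i ∈ range (2 * m), H ^ i) * M⁻¹ = ∑ j ∈ range m, H ^ j * K * (H ^ j)ᴴ := by
    rw [geom_sum_range_two_mul, sum_mul]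
    refine sum_congr rfl fun j _ => ?_
    rw [← inv_mul_sub_pow_two_mul_mul_eq hM hMu hA, inv_mul_add_sub_mul_inv hMu, mul_assoc, add_mul, one_mul]
  obtain ⟨k, rfl⟩ := Nat.exists_eq_add_of_lt hm
  rw [hsum, zero_add, sum_range_succ', pow_zero, one_mul, conjTranspose_one, mul_one]
  exact PosDef.posSemidef_add
    (posSemidef_sum _ fun j _ => hK.posSemidef.mul_mul_conjTranspose_same _) hK

end InnerIteration

end Matrix

section SSOR

variable {n : ℕ} {L : Matrix (Fin n) (Fin n) ℝ} {d : Fin n → ℝ}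

theorem isUnit_diagonal_add_smul (hL : ∀ i j : Fin n, i ≤ j → L i j = 0) (hd : ∀ i, d i ≠ 0)
    (ω : ℝ) : IsUnit (diagonal d + ω • L) := by
  have hlow : (diagonal d + ω • L).IsLowerTriangular := fun i j (hij : i < j) => by
    simp [diagonal_apply_ne _ hij.ne, hL i j hij.le]
  rw [isUnit_iff_isUnit_det, det_of_isLowerTriangular _ hlow]
  simpa [hL] using (prod_ne_zero_iff.mpr fun i _ => hd i).isUnit

theorem ssorM_diagonal_posDef (hL : ∀ i j : Fin n, i ≤ j → L i j = 0) (hd : ∀ i, 0 < d i)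
    {ω : ℝ} (hω : 0 < ω) (hω2 : ω < 2) : (ssorM L (diagonal d) ω).PosDef := by
  have hB := isUnit_diagonal_add_smul hL (fun i => (hd i).ne') ω
  have hc : 0 < ω⁻¹ * (2 - ω)⁻¹ := mul_pos (inv_pos.mpr hω) (inv_pos.mpr (sub_pos.mpr hω2))
  have := ((posDef_diagonal_iff.mpr hd).inv.mul_mul_conjTranspose_same
    (vecMul_injective_iff_isUnit.mpr hB)).smul hc
  simpa [ssorM] using this

theorem ssorM_eq (L : Matrix (Fin n) (Fin n) ℝ) {D : Matrix (Fin n) (Fin n) ℝ} (hD : IsUnit D)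
    (ω : ℝ) : ssorM L D ω =
      (ω⁻¹ * (2 - ω)⁻¹) • (D + ω • (L + Lᵀ) + ω ^ 2 • (L * D⁻¹ * Lᵀ)) := by
  have hD' := (isUnit_iff_isUnit_det D).mp hD
  simp only [ssorM, add_mul, mul_add, smul_mul_assoc, mul_smul_comm, mul_nonsing_inv _ hD',
    nonsing_inv_mul_cancel_right _ _ hD', one_mul, smul_add, smul_smul]
  module

theorem smul_ssorM_add_ssorM_sub (L : Matrix (Fin n) (Fin n) ℝ) {D : Matrix (Fin n) (Fin n) ℝ}
    (hD : IsUnit D) {ω : ℝ} (hω0 : ω ≠ 0) (hω2 : ω ≠ 2) :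
    (ω * (2 - ω)) • (ssorM L D ω + (ssorM L D ω - (L + D + Lᵀ))) =
      (2 - 2 * ω + ω ^ 2) • D + ω ^ 2 • (L + Lᵀ) + (2 * ω ^ 2) • (L * D⁻¹ * Lᵀ) := by
  have hc : ω * (2 - ω) * (ω⁻¹ * (2 - ω)⁻¹) = 1 := by
    field_simp [sub_ne_zero.mpr hω2.symm]
  rw [ssorM_eq L hD]
  linear_combination (norm := module) (2 : ℝ) • hc • (D + ω • (L + Lᵀ) + ω ^ 2 • (L * D⁻¹ * Lᵀ))

theorem mul_dotProduct_diagonal_le_dotProduct_add_transpose (hd : ∀ i, 0 < d i) {c : ℝ}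
    (hc : ∀ x ∈ spectrum ℝ (dhalf (diagonal d) * (L + Lᵀ) * dhalf (diagonal d)), c ≤ x)
    (v : Fin n → ℝ) : c * (v ⬝ᵥ (diagonal d *ᵥ v)) ≤ v ⬝ᵥ ((L + Lᵀ) *ᵥ v) := by
  set E := diagonal fun i => √(d i)
  have hE : dhalf (diagonal d) * E = 1 := by
    simp [E, dhalf, diagonal_mul_diagonal, fun i => (Real.sqrt_pos.mpr (hd i)).ne']
  have hEE : Eᵀ * E = diagonal d := by
    simp [E, diagonal_mul_diagonal, fun i => Real.mul_self_sqrt (hd i).le]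
  have hS : (dhalf (diagonal d) * (L + Lᵀ) * dhalf (diagonal d)).IsHermitian := by
    simp [IsHermitian, dhalf, Matrix.mul_assoc, add_comm]
  have hEt : Eᵀ * dhalf (diagonal d) = 1 := by
    simp [E, dhalf, diagonal_mul_diagonal, fun i => (Real.sqrt_pos.mpr (hd i)).ne']
  have := hS.mul_dotProduct_le hc E v
  rwa [hEE, ← Matrix.mul_assoc, ← Matrix.mul_assoc, hEt, Matrix.one_mul, Matrix.mul_assoc, hE,
    Matrix.mul_one] at this

theorem ssorM_add_ssorM_sub_posDef (hd : ∀ i, 0 < d i) {c ω : ℝ}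
    (hc : ∀ x ∈ spectrum ℝ (dhalf (diagonal d) * (L + Lᵀ) * dhalf (diagonal d)), c ≤ x)
    (hω : 0 < ω) (hω2 : ω < 2) (hq : 0 < (c + 1) * ω ^ 2 - 2 * ω + 2) :
    (ssorM L (diagonal d) ω + (ssorM L (diagonal d) ω - (L + diagonal d + Lᵀ))).PosDef := by
  have hD := posDef_diagonal_iff.mpr hd
  have hX : ((2 - 2 * ω + ω ^ 2) • diagonal d + ω ^ 2 • (L + Lᵀ)
      + (2 * ω ^ 2) • (L * (diagonal d)⁻¹ * Lᵀ)).PosDef := by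
    refine .of_dotProduct_mulVec_pos ?_ fun v hv => ?_
    · simp [IsHermitian, Matrix.mul_assoc, transpose_nonsing_inv, add_comm (_ • Lᵀ)]
    have hDv : 0 < v ⬝ᵥ (diagonal d *ᵥ v) := by simpa using hD.dotProduct_mulVec_pos hv
    have hLv := mul_dotProduct_diagonal_le_dotProduct_add_transpose hd hc v
    have hLDLv : 0 ≤ v ⬝ᵥ ((L * (diagonal d)⁻¹ * Lᵀ) *ᵥ v) := by
      simpa using (hD.inv.posSemidef.mul_mul_conjTranspose_same L).dotProduct_mulVec_nonneg v
    rw [star_trivial, add_mulVec, add_mulVec]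
    simp only [smul_mulVec, dotProduct_add, dotProduct_smul, smul_eq_mul]
    nlinarith [mul_le_mul_of_nonneg_left hLv (sq_nonneg ω), mul_pos hq hDv,
      mul_nonneg (sq_nonneg ω) hLDLv]
  have hω' : 0 < ω * (2 - ω) := mul_pos hω (sub_pos.mpr hω2)
  rw [← smul_ssorM_add_ssorM_sub L hD.isUnit hω.ne' (by linarith)] at hX
  have := hX.smul (inv_pos.mpr hω')
  rwa [smul_smul, inv_mul_cancel₀ hω'.ne', one_smul] at this

end SSOR

theorem ssor_omega_bounds {μ ω : ℝ} (h : (μ < 1 / 2 ∧ μ ≠ 0 ∧ 0 < ω ∧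
      ω < (1 - √(1 - 2 * μ)) / μ) ∨ (μ = 0 ∧ 0 < ω ∧ ω < 1)) :
    0 < ω ∧ μ ≤ 1 / 2 ∧ ω * (1 + √(1 - 2 * μ)) < 2 := by
  rcases h with ⟨hμ, hμ0, hω, hlt⟩ | ⟨rfl, hω, hlt⟩
  · have hs := Real.sq_sqrt (by linarith : 0 ≤ 1 - 2 * μ)
    have hs0 := Real.sqrt_nonneg (1 - 2 * μ)
    -- `(1 - s) / μ = 2 / (1 + s)` because `(1 - s)(1 + s) = 2μ`
    have hroot : (1 - √(1 - 2 * μ)) / μ = 2 / (1 + √(1 - 2 * μ)) := by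
      rw [div_eq_div_iff hμ0 (by positivity)]
      nlinarith
    rw [hroot, lt_div_iff₀ (by positivity)] at hlt
    exact ⟨hω, hμ.le, hlt⟩
  · refine ⟨hω, by norm_num, ?_⟩
    norm_num
    linarith

/-- With `s = √(1 - 2μ)`, the quadratic factors as `((2 - ω)² - (sω)²) / 2`. -/
theorem quadratic_pos_of_mul_one_add_sqrt_lt {μ ω : ℝ} (hμ : μ ≤ 1 / 2) (hω : 0 < ω)
    (hlt : ω * (1 + √(1 - 2 * μ)) < 2) : ω < 2 ∧ 0 < μ * ω ^ 2 - 2 * ω + 2 := by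
  have hs := Real.sq_sqrt (by linarith : 0 ≤ 1 - 2 * μ)
  have hs0 := Real.sqrt_nonneg (1 - 2 * μ)
  have hsω : √(1 - 2 * μ) * ω < 2 - ω := by linarith
  refine ⟨by nlinarith, ?_⟩
  nlinarith [mul_pos (by nlinarith : 0 < 2 - ω - √(1 - 2 * μ) * ω)
    (by nlinarith : 0 < 2 - ω + √(1 - 2 * μ) * ω)]

theorem stmt_15_general {n : ℕ} (L D : Matrix (Fin n) (Fin n) ℝ)
    (hL : ∀ i j : Fin n, i ≤ j → L i j = 0)
    (hD : D.IsDiag) (hDpos : ∀ i, 0 < D i i)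
    -- `lmin` is the least element of the real spectrum of `D^{-1/2}(L + Lᵀ)D^{-1/2}`,
    -- so that `μ = lmin + 1`
    (lmin : ℝ)
    (hmin : ∀ lam ∈ spectrum ℝ (dhalf D * (L + Lᵀ) * dhalf D), lmin ≤ lam)
    (ω : ℝ)
    (ℓ : ℕ) (heven : Even ℓ) (hℓ : 2 ≤ ℓ)
    (hcase : (lmin + 1 < 1 / 2 ∧ lmin + 1 ≠ 0 ∧ 0 < ω ∧ ω < (1 - Real.sqrt (1 - 2 * (lmin + 1))) / (lmin + 1)) ∨ (lmin + 1 = 0 ∧ 0 < ω ∧ ω < 1)) :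
    (ssorC L D ω ℓ).IsPD := by
  obtain ⟨d, rfl⟩ : ∃ d, D = diagonal d := ⟨D.diag, hD.diagonal_diag.symm⟩
  have hd : ∀ i, 0 < d i := by simpa using hDpos
  obtain ⟨hω, hμ, hlt⟩ := ssor_omega_bounds hcase
  obtain ⟨hω2, hq⟩ := quadratic_pos_of_mul_one_add_sqrt_lt hμ hω hlt
  obtain ⟨m, rfl⟩ := heven
  have hM := ssorM_diagonal_posDef hL hd hω hω2
  have hA : (L + diagonal d + Lᵀ).IsHermitian := by
    simp only [IsHermitian, conjTranspose_eq_transpose_of_trivial, transpose_add,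
      transpose_transpose, diagonal_transpose]
    abel
  rw [← two_mul]
  exact (posDef_sum_range_pow_mul_inv hM.isHermitian hM.isUnit hA
    (ssorM_add_ssorM_sub_posDef hd hmin hω hω2 hq) (by omega)).isPD_s15

theorem stmt_15 {n : ℕ} (L D : Matrix (Fin n) (Fin n) ℝ)
    (hL : ∀ i j : Fin n, i ≤ j → L i j = 0)
    (hD : D.IsDiag) (hDpos : ∀ i, 0 < D i i)
    -- `lmin` is the least element of the real spectrum of `D^{-1/2}(L + Lᵀ)D^{-1/2}`,
    -- so that `μ = lmin + 1`
    (lmin : ℝ)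
    (hmem : lmin ∈ spectrum ℝ (dhalf D * (L + Lᵀ) * dhalf D))
    (hmin : ∀ lam ∈ spectrum ℝ (dhalf D * (L + Lᵀ) * dhalf D), lmin ≤ lam)
    (ω : ℝ) (hω0 : ω ≠ 0) (hω2 : ω ≠ 2)
    (ℓ : ℕ) (heven : Even ℓ) (hℓ : 2 ≤ ℓ)
    (hcase : (lmin + 1 < 1 / 2 ∧ lmin + 1 ≠ 0 ∧ 0 < ω ∧ ω < (1 - Real.sqrt (1 - 2 * (lmin + 1))) / (lmin + 1)) ∨ (lmin + 1 = 0 ∧ 0 < ω ∧ ω < 1)) :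
    (ssorC L D ω ℓ).IsPD :=
  stmt_15_general L D hL hD hDpos lmin hmin ω ℓ heven hℓ hcase
end
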